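/- Let φ be a propositional CNF formula with nonempty finite clause set Cl over variables Var(φ), and let B_φ be the associated smart profile over D = {0,1}. Then φ is satisfiable if and only if B_φ has a consistent certificate c with c_a ≤ 2 for every agent a. -/

import Mathlib

namespace SmartVoting

/-- A smart ballot for agent `a`: levels `1, …, k-1` are delegations `(S h, F h)`
(with `a ∉ S h` and `F h` depending only on the votes of the members of `S h`),
and level `k` is the backup direct vote. -/
structure SmartBallot (N D : Type*) (a : N) where
  k : ℕ
  k_pos : 1 ≤ k
  S : ℕ → Finset N
  F : ℕ → (N → D) → D
  vote : D
  no_self : ∀ h, 1 ≤ h → h < k → a ∉ S h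
  local_dep : ∀ h, 1 ≤ h → h < k →
    ∀ Y Y' : N → D, (∀ s ∈ S h, Y s = Y' s) → F h Y = F h Y'

variable {N D : Type*} [Fintype N] [DecidableEq N]

/-- `c` is a certificate for the profile `B`. -/
def IsCertificate (B : ∀ a : N, SmartBallot N D a) (c : N → ℕ) : Prop :=
  ∀ a, 1 ≤ c a ∧ c a ≤ (B a).k

/-- `c` is consistent via the enumeration `σ`, producing the total outcome `X`. -/
def ConsistentVia (B : ∀ a : N, SmartBallot N D a) (c : N → ℕ)
    (σ : Fin (Fintype.card N) ≃ N) (X : N → D) : Prop :=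
  ∀ a : N,
    (c a = (B a).k → X a = (B a).vote) ∧
    (c a < (B a).k →
      ∀ Y : N → D, (∀ b : N, σ.symm b < σ.symm a → Y b = X b) →
        (B a).F (c a) Y = X a)

/-- `c` is a consistent certificate for `B`. -/
def Consistent (B : ∀ a : N, SmartBallot N D a) (c : N → ℕ) : Prop :=
  ∃ σ X, ConsistentVia B c σ X


variable {V : Type*} [Fintype V] [DecidableEq V]

/-- Agents of the reduction: `Sum.inl true` is the fresh agent `x`,
`Sum.inl false` is the fresh agent `y`, `Sum.inr (Sum.inl c)` is the agent for
clause `c`, and `Sum.inr (Sum.inr v)` is the agent for variable `v`. -/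
abbrev CAgent (V : Type*) (Cl : Finset (Finset (V × Bool))) : Type _ :=
  Bool ⊕ ({c // c ∈ Cl} ⊕ V)

variable (Cl : Finset (Finset (V × Bool)))

def xA : CAgent V Cl := Sum.inl true

def yA : CAgent V Cl := Sum.inl false

def clA (c : {c // c ∈ Cl}) : CAgent V Cl := Sum.inr (Sum.inl c)

def vA (v : V) : CAgent V Cl := Sum.inr (Sum.inr v)

/-- The finset of all clause agents. -/
def clauseAgents : Finset (CAgent V Cl) :=
  Finset.univ.image (fun c : {c // c ∈ Cl} => clA Cl c)

/-- The ballot of agent `x`: the direct vote `1`. -/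
def xBallot : SmartBallot (CAgent V Cl) Bool (xA Cl) where
  k := 1
  k_pos := le_refl 1
  S := fun _ => ∅
  F := fun _ _ => true
  vote := true
  no_self := by
    intro h h1 h2
    exact absurd (lt_of_le_of_lt h1 h2) (lt_irrefl 1)
  local_dep := by
    intro h h1 h2
    exact absurd (lt_of_le_of_lt h1 h2) (lt_irrefl 1)

/-- The ballot of a variable agent `v`: copy `x`'s vote, with backup vote `0`. -/
def varBallot (v : V) : SmartBallot (CAgent V Cl) Bool (vA Cl v) where
  k := 2
  k_pos := one_le_two
  S := fun _ => {xA Cl}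
  F := fun _ z => z (xA Cl)
  vote := false
  no_self := by
    intro h _ _ hv
    simp [xA, vA] at hv
  local_dep := by
    intro h _ _ Y Y' hYY'
    exact hYY' _ (Finset.mem_singleton_self _)

/-- The ballot of agent `y`:
level 1 is the conjunction of `x`'s vote and all clause agents' votes,
level 2 is the conjunction of all clause agents' votes, and the backup vote is `1`. -/
def yBallot : SmartBallot (CAgent V Cl) Bool (yA Cl) where
  k := 3
  k_pos := by omega
  S := fun h => if h = 1 then insert (xA Cl) (clauseAgents Cl) else clauseAgents Cl
  F := fun h z =>
    decide (∀ b ∈ (if h = 1 then insert (xA Cl) (clauseAgents Cl) else clauseAgents Cl),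
      z b = true)
  vote := true
  no_self := by
    intro h _ _ hy
    beta_reduce at hy
    have hnc : yA Cl ∉ clauseAgents Cl := by
      simp [clauseAgents, clA, yA]
    by_cases h1 : h = 1
    · rw [if_pos h1] at hy
      rcases Finset.mem_insert.mp hy with h' | h'
      · exact absurd h' (by simp [xA, yA])
      · exact hnc h'
    · rw [if_neg h1] at hy
      exact hnc hy
  local_dep := by
    intro h _ _ Y Y' hYY'
    rw [decide_eq_decide]
    constructor
    · intro H b hb; rw [← hYY' b hb]; exact H b hb
    · intro H b hb; rw [hYY' b hb]; exact H b hb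

/-- The ballot of a clause agent `c`. If `c` contains a complementary pair of
literals, then `c` copies `y`'s vote, with backup vote `1`. Otherwise, level 1
copies `y`'s vote, level 2 is the disjunction of `y`'s vote and the literals of
the clause, and the backup vote is `1`. -/
def clauseBallot (c : {cl // cl ∈ Cl}) : SmartBallot (CAgent V Cl) Bool (clA Cl c) :=
  if _ : ∃ v : V, (v, true) ∈ c.1 ∧ (v, false) ∈ c.1 then
    { k := 2
      k_pos := one_le_two
      S := fun _ => {yA Cl}
      F := fun _ z => z (yA Cl)
      vote := true
      no_self := by
        intro h _ _ hc
        simp [yA, clA] at hc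
      local_dep := by
        intro h _ _ Y Y' hYY'
        exact hYY' _ (Finset.mem_singleton_self _) }
  else
    { k := 3
      k_pos := by omega
      S := fun h =>
        if h = 1 then {yA Cl} else insert (yA Cl) (c.1.image (fun l => vA Cl l.1))
      F := fun h z =>
        if h = 1 then z (yA Cl)
        else decide (z (yA Cl) = true ∨ ∃ l ∈ c.1, z (vA Cl l.1) = l.2)
      vote := true
      no_self := by
        intro h _ _ hc
        beta_reduce at hc
        by_cases h1 : h = 1
        · rw [if_pos h1] at hc
          simp [yA, clA] at hc
        · rw [if_neg h1] at hc
          rcases Finset.mem_insert.mp hc with h' | h'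
          · simp [yA, clA] at h'
          · rcases Finset.mem_image.mp h' with ⟨l, _, hl⟩
            simp [vA, clA] at hl
      local_dep := by
        intro h _ _ Y Y' hYY'
        beta_reduce at hYY' ⊢
        by_cases h1 : h = 1
        · simp only [if_pos h1] at hYY' ⊢
          exact hYY' _ (Finset.mem_singleton_self _)
        · simp only [if_neg h1] at hYY' ⊢
          rw [decide_eq_decide]
          have hy : Y (yA Cl) = Y' (yA Cl) := hYY' _ (Finset.mem_insert_self _ _)
          have hv : ∀ l ∈ c.1, Y (vA Cl l.1) = Y' (vA Cl l.1) := fun l hl =>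
            hYY' _ (Finset.mem_insert_of_mem (Finset.mem_image_of_mem _ hl))
          constructor
          · rintro (h' | ⟨l, hl, h'⟩)
            · exact Or.inl (by rw [← hy]; exact h')
            · exact Or.inr ⟨l, hl, by rw [← hv l hl]; exact h'⟩
          · rintro (h' | ⟨l, hl, h'⟩)
            · exact Or.inl (by rw [hy]; exact h')
            · exact Or.inr ⟨l, hl, by rw [hv l hl]; exact h'⟩ }

/-- The smart profile `B_φ` associated to the CNF formula with clause set `Cl`. -/
def cnfProfile : ∀ a : CAgent V Cl, SmartBallot (CAgent V Cl) Bool a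
  | Sum.inl true => xBallot Cl
  | Sum.inl false => yBallot Cl
  | Sum.inr (Sum.inl c) => clauseBallot Cl c
  | Sum.inr (Sum.inr v) => varBallot Cl v


section
variable {α : Type*} [Fintype α] [DecidableEq α] (rk : α → ℕ)

noncomputable def myOrder : LinearOrder α :=
  LinearOrder.lift' (fun a => toLex (rk a, Fintype.equivFin α a))
    (fun a b h => (Fintype.equivFin α).injective (congrArg Prod.snd (toLex.injective h)))

noncomputable def myEquiv : Fin (Fintype.card α) ≃ α :=
  letI := myOrder rk
  (monoEquivOfFin α rfl).toEquiv

lemma myEquiv_symm_lt {a b : α} (h : rk a < rk b) :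
    (myEquiv rk).symm a < (myEquiv rk).symm b := by
  letI := myOrder rk
  have hf : toLex (rk a, Fintype.equivFin α a) < toLex (rk b, Fintype.equivFin α b) :=
    Prod.Lex.lt_iff.mpr (Or.inl h)
  have hab : a < b := lt_of_le_not_ge (le_of_lt hf) (not_le_of_gt hf)
  exact (OrderIso.lt_iff_lt (monoEquivOfFin α rfl).symm).mpr hab
end


/-- A CNF formula with nonempty clause set `Cl` is satisfiable iff the associated
smart profile has a consistent certificate using at most the second preference
level of every agent. -/
theorem satisfiable_iff_consistent_certificate_le_two (hCl : Cl.Nonempty) :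
    (∃ τ : V → Bool, ∀ cl ∈ Cl, ∃ l ∈ cl, τ l.1 = l.2) ↔
      (∃ c : CAgent V Cl → ℕ, IsCertificate (cnfProfile Cl) c ∧
        Consistent (cnfProfile Cl) c ∧ ∀ a, c a ≤ 2) := by
  classical
  -- the rank function used to order the agents: x, then variables, then clauses, then y
  set rk : CAgent V Cl → ℕ :=
    Sum.elim (fun b => cond b 0 3) (Sum.elim (fun _ => 2) (fun _ => 1)) with hrk
  constructor
  · -- satisfiable → certificate
    rintro ⟨τ, hτ⟩
    have hσxv : ∀ v : V, (myEquiv rk).symm (xA Cl) < (myEquiv rk).symm (vA Cl v) :=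
      fun v => myEquiv_symm_lt rk Nat.zero_lt_one
    have hσvc : ∀ (v : V) (c' : {cl // cl ∈ Cl}),
        (myEquiv rk).symm (vA Cl v) < (myEquiv rk).symm (clA Cl c') :=
      fun v c' => myEquiv_symm_lt rk Nat.one_lt_two
    have hσcy : ∀ c' : {cl // cl ∈ Cl},
        (myEquiv rk).symm (clA Cl c') < (myEquiv rk).symm (yA Cl) :=
      fun c' => myEquiv_symm_lt rk (Nat.lt_succ_self 2)
    refine ⟨Sum.elim (fun b => cond b 1 2)
        (Sum.elim (fun _ => 2) (fun v => if τ v then 1 else 2)), ?_, ?_, ?_⟩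
    · -- certificate bounds
      rintro ((_|_) | (c' | v))
      · exact ⟨by norm_num, by change (2:ℕ) ≤ 3; norm_num⟩
      · exact ⟨le_refl 1, le_refl 1⟩
      · refine ⟨by norm_num, ?_⟩
        change (2:ℕ) ≤ (clauseBallot Cl c').k
        rw [clauseBallot]
        split <;> norm_num
      · constructor
        · change (1:ℕ) ≤ if τ v = true then 1 else 2
          split <;> norm_num
        · change (if τ v = true then 1 else 2) ≤ (2:ℕ)
          split <;> norm_num
    · -- consistency
      refine ⟨myEquiv rk, Sum.elim (fun _ => true) (Sum.elim (fun _ => true) τ), ?_⟩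
      rintro ((_|_) | (c' | v))
      · -- agent y
        refine ⟨fun h => by change (2:ℕ) = 3 at h; norm_num at h, fun _ Y hY => ?_⟩
        simp only [cnfProfile, yBallot, Sum.elim_inl, Sum.elim_inr, Bool.cond_false,
          Bool.cond_true, if_neg (show ¬ (2:ℕ) = 1 by norm_num), decide_eq_true_eq]
        intro b hb
        simp only [clauseAgents, Finset.mem_image] at hb
        obtain ⟨c'', _, rfl⟩ := hb
        exact (hY _ (hσcy c'')).trans rfl
      · -- agent x
        exact ⟨fun _ => rfl, fun h => by change (1:ℕ) < 1 at h; norm_num at h⟩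
      · -- clause agents
        by_cases hP : ∃ v : V, (v, true) ∈ c'.1 ∧ (v, false) ∈ c'.1
        · constructor
          · intro _
            change true = (clauseBallot Cl c').vote
            rw [clauseBallot, dif_pos hP]
          · intro hlt
            exfalso
            change (2:ℕ) < (clauseBallot Cl c').k at hlt
            have hk2 : (clauseBallot Cl c').k = 2 := by rw [clauseBallot, dif_pos hP]
            omega
        · constructor
          · intro h
            exfalso
            change (2:ℕ) = (clauseBallot Cl c').k at h
            have hk3 : (clauseBallot Cl c').k = 3 := by rw [clauseBallot, dif_neg hP]
            omega
          · intro _ Y hY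
            simp only [cnfProfile, Sum.elim_inl, Sum.elim_inr, clauseBallot, dif_neg hP,
              if_neg (show ¬ (2:ℕ) = 1 by norm_num), decide_eq_true_eq]
            obtain ⟨l, hl, hτl⟩ := hτ c'.1 c'.2
            exact Or.inr ⟨l, hl, (hY _ (hσvc l.1 c')).trans hτl⟩
      · -- variable agents
        by_cases hv : τ v = true
        · constructor
          · intro h
            exfalso
            change (if τ v = true then 1 else 2) = (2:ℕ) at h
            rw [if_pos hv] at h
            norm_num at h
          · intro _ Y hY
            change Y (xA Cl) = τ v
            rw [hv]
            exact (hY _ (hσxv v)).trans rfl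
        · constructor
          · intro _
            change τ v = false
            exact Bool.not_eq_true _ |>.mp hv
          · intro h
            exfalso
            change (if τ v = true then 1 else 2) < (2:ℕ) at h
            rw [if_neg hv] at h
            norm_num at h
    · -- bound by 2
      rintro ((_|_) | (c' | v))
      · exact le_refl 2
      · exact one_le_two
      · exact le_refl 2
      · change (if τ v = true then 1 else 2) ≤ 2
        split <;> norm_num
  · -- certificate → satisfiable
    rintro ⟨c, hcert, ⟨σ, X, hcons⟩, hle⟩
    -- x votes true
    have hx : X (xA Cl) = true := by
      have hbd := hcert (xA Cl)
      have hk : (cnfProfile Cl (xA Cl)).k = 1 := rfl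
      rw [hk] at hbd
      have := (hcons (xA Cl)).1 (by omega)
      exact this.trans rfl
    -- every clause agent processed before y votes true, and witnesses a literal
    have L1 : ∀ c' : {cl // cl ∈ Cl}, σ.symm (clA Cl c') < σ.symm (yA Cl) →
        X (clA Cl c') = true ∧
          (¬ (∃ v : V, (v, true) ∈ c'.1 ∧ (v, false) ∈ c'.1) →
            ∃ l ∈ c'.1, X (vA Cl l.1) = l.2) := by
      intro c' hlt
      have hyne : ∀ b : CAgent V Cl, σ.symm b < σ.symm (clA Cl c') → b ≠ yA Cl := by
        intro b hb heq
        subst heq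
        exact absurd (lt_trans hb hlt) (lt_irrefl _)
      have hynlt : ¬ σ.symm (yA Cl) < σ.symm (clA Cl c') := fun h => hyne _ h rfl
      have hbd := hcert (clA Cl c')
      have hle2 := hle (clA Cl c')
      -- level 1 is impossible
      have hne1 : c (clA Cl c') ≠ 1 := by
        intro h1
        have hklt : (1:ℕ) < (cnfProfile Cl (clA Cl c')).k := by
          change 1 < (clauseBallot Cl c').k
          rw [clauseBallot]
          split <;> norm_num
        have hstep := (hcons (clA Cl c')).2 (by omega)
        rw [h1] at hstep
        have hFy : ∀ z : CAgent V Cl → Bool,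
            (cnfProfile Cl (clA Cl c')).F 1 z = z (yA Cl) := by
          intro z
          change (clauseBallot Cl c').F 1 z = z (yA Cl)
          rw [clauseBallot]
          split <;> simp
        have hag : ∀ t : Bool, ∀ b : CAgent V Cl, σ.symm b < σ.symm (clA Cl c') →
            (if b = yA Cl then t else X b) = X b :=
          fun t b hb => if_neg (hyne b hb)
        have h1' := hstep (fun b => if b = yA Cl then true else X b) (hag true)
        have h2' := hstep (fun b => if b = yA Cl then false else X b) (hag false)
        rw [hFy] at h1' h2'
        rw [if_pos rfl] at h1' h2'
        rw [← h1'] at h2'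
        exact Bool.noConfusion h2'
      have hc2 : c (clA Cl c') = 2 := by omega
      by_cases hP : ∃ v : V, (v, true) ∈ c'.1 ∧ (v, false) ∈ c'.1
      · -- tautological clause: level 2 is the direct vote true
        have hk2 : (cnfProfile Cl (clA Cl c')).k = 2 := by
          change (clauseBallot Cl c').k = 2
          rw [clauseBallot, dif_pos hP]
        have hvote : (cnfProfile Cl (clA Cl c')).vote = true := by
          change (clauseBallot Cl c').vote = true
          rw [clauseBallot, dif_pos hP]
        have := (hcons (clA Cl c')).1 (by omega)
        exact ⟨this.trans hvote, fun h => absurd hP h⟩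
      · -- non-tautological clause: level 2 is the disjunction
        have hk3 : (cnfProfile Cl (clA Cl c')).k = 3 := by
          change (clauseBallot Cl c').k = 3
          rw [clauseBallot, dif_neg hP]
        have hstep := (hcons (clA Cl c')).2 (by omega)
        rw [hc2] at hstep
        have hF2 : ∀ z : CAgent V Cl → Bool,
            (cnfProfile Cl (clA Cl c')).F 2 z =
              decide (z (yA Cl) = true ∨ ∃ l ∈ c'.1, z (vA Cl l.1) = l.2) := by
          intro z
          change (clauseBallot Cl c').F 2 z = _
          rw [clauseBallot, dif_neg hP]
          simp only [if_neg (show ¬ (2:ℕ) = 1 by norm_num)]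
        -- first, X at the clause agent is true
        have hXa : X (clA Cl c') = true := by
          have h1 := hstep (fun b => if b = yA Cl then true else X b)
            (fun b hb => if_neg (hyne b hb))
          rw [hF2] at h1
          rw [← h1]
          simp
        refine ⟨hXa, fun _ => ?_⟩
        -- adversarial assignment falsifying all undetermined literals
        set bad : CAgent V Cl → Bool :=
          Sum.elim (fun _ => false)
            (Sum.elim (fun _ => true) (fun v => !(decide ((v, true) ∈ c'.1)))) with hbad
        have h2 := hstep (fun b => if σ.symm b < σ.symm (clA Cl c') then X b else bad b)
          (fun b hb => if_pos hb)
        rw [hF2, hXa] at h2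
        have h3 := of_decide_eq_true h2
        have hyA : (if σ.symm (yA Cl) < σ.symm (clA Cl c') then X (yA Cl)
            else bad (yA Cl)) = false := by
          rw [if_neg hynlt]
          rfl
        rcases h3 with h3 | ⟨l, hl, hlv⟩
        · rw [hyA] at h3
          exact absurd h3 (by norm_num)
        · refine ⟨l, hl, ?_⟩
          by_cases hpred : σ.symm (vA Cl l.1) < σ.symm (clA Cl c')
          · rwa [if_pos hpred] at hlv
          · exfalso
            rw [if_neg hpred] at hlv
            have hbv : bad (vA Cl l.1) = !(decide ((l.1, true) ∈ c'.1)) := rfl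
            rw [hbv] at hlv
            obtain ⟨v, b⟩ := l
            cases b
            · -- negative literal: then (v, true) ∈ clause, contradicting non-tautology
              simp only [Bool.not_eq_false'] at hlv
              exact hP ⟨v, of_decide_eq_true hlv, hl⟩
            · simp only [Bool.not_eq_true'] at hlv
              exact (of_decide_eq_false hlv) hl
    -- every clause agent is processed before y
    have L2 : ∀ c' : {cl // cl ∈ Cl}, σ.symm (clA Cl c') < σ.symm (yA Cl) := by
      intro c'
      by_contra hlt
      have hky : (cnfProfile Cl (yA Cl)).k = 3 := rfl
      have hbd := hcert (yA Cl)
      have hl2 := hle (yA Cl)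
      have hstep := (hcons (yA Cl)).2 (by rw [hky]; omega)
      have hclsub : clauseAgents Cl ⊆
          (if c (yA Cl) = 1 then insert (xA Cl) (clauseAgents Cl) else clauseAgents Cl) := by
        split
        · exact Finset.subset_insert _ _
        · exact Finset.Subset.refl _
      have hcc : clA Cl c' ∈
          (if c (yA Cl) = 1 then insert (xA Cl) (clauseAgents Cl) else clauseAgents Cl) :=
        hclsub (by
          simp only [clauseAgents, Finset.mem_image]
          exact ⟨c', Finset.mem_univ c', rfl⟩)
      have hne : ∀ b : CAgent V Cl, σ.symm b < σ.symm (yA Cl) → b ≠ clA Cl c' :=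
        fun b hb heq => hlt (heq ▸ hb)
      -- first adversarial assignment: the clause agent fails
      have h1 := hstep (fun b => if b = clA Cl c' then false else X b)
        (fun b hb => if_neg (hne b hb))
      change (yBallot Cl).F (c (yA Cl)) _ = X (yA Cl) at h1
      simp only [yBallot] at h1
      have hXy : X (yA Cl) = false := by
        rw [← h1, decide_eq_false_iff_not]
        intro H
        have := H _ hcc
        rw [if_pos rfl] at this
        exact Bool.noConfusion this
      -- second assignment: everything undetermined is true
      have h2 := hstep (fun b => if σ.symm b < σ.symm (yA Cl) then X b else true)
        (fun b hb => if_pos hb)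
      change (yBallot Cl).F (c (yA Cl)) _ = X (yA Cl) at h2
      simp only [yBallot] at h2
      rw [hXy, decide_eq_false_iff_not] at h2
      push_neg at h2
      obtain ⟨b, hbS, hbv⟩ := h2
      have hbpred : σ.symm b < σ.symm (yA Cl) := by
        by_contra h
        rw [if_neg h] at hbv
        exact hbv rfl
      rw [if_pos hbpred] at hbv
      have hbX : X b = false := by
        cases hXb : X b
        · rfl
        · exact absurd hXb hbv
      have hbcase : b = xA Cl ∨ ∃ c'' : {cl // cl ∈ Cl}, b = clA Cl c'' := by
        have hbins : b ∈ insert (xA Cl) (clauseAgents Cl) := by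
          revert hbS
          split
          · exact id
          · exact fun h => Finset.mem_insert_of_mem h
        rcases Finset.mem_insert.mp hbins with h | h
        · exact Or.inl h
        · simp only [clauseAgents, Finset.mem_image] at h
          obtain ⟨c'', _, hc''⟩ := h
          exact Or.inr ⟨c'', hc''.symm⟩
      rcases hbcase with rfl | ⟨c'', rfl⟩
      · rw [hx] at hbX
        exact Bool.noConfusion hbX
      · have := (L1 c'' hbpred).1
        rw [this] at hbX
        exact Bool.noConfusion hbX
    -- assemble the satisfying assignment
    refine ⟨fun v => X (vA Cl v), fun cl hcl => ?_⟩
    by_cases hP : ∃ v : V, (v, true) ∈ cl ∧ (v, false) ∈ cl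
    · obtain ⟨v, hvt, hvf⟩ := hP
      refine ⟨(v, X (vA Cl v)), ?_, rfl⟩
      cases h : X (vA Cl v)
      · exact hvf
      · exact hvt
    · obtain ⟨l, hl, hX⟩ := (L1 ⟨cl, hcl⟩ (L2 ⟨cl, hcl⟩)).2 hP
      exact ⟨l, hl, hX⟩

end SmartVoting
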